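/- Let m ≥ 2 and, in the polynomial ring k[x_{1,1},x_{1,2},x_{1,3},x_{1,4},…,x_{m,1},x_{m,2},x_{m,3},x_{m,4}] in 4m variables, let Ī_m be the squarefree monomial ideal generated by x_{i,1}x_{i,2}x_{i,3}x_{i,4} for 1 ≤ i ≤ m together with x_{i,1}x_{i,2}x_{i+1,1}x_{i+1,3} for 1 ≤ i ≤ m, where the first index is taken cyclically modulo m (so m+1 means 1). Then for every 1 ≤ i ≤ m: C_{i,1}(Ī_m) = {(i,1)}, C_{i,2}(Ī_m) = {(i,1),(i,2)}, C_{i,3}(Ī_m) = {(i,1),(i,3)}, and C_{i,4}(Ī_m) = {(i,1),(i,2),(i,3),(i,4)}. Hence the support poset of Ī_m consists of m pairwise disjoint diamonds. -/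
import Mathlib


open MvPolynomial

set_option linter.unusedSectionVars false

/-- The squarefree monomial with support `s`: `∏_{j ∈ s} x_j`. -/
noncomputable def sfMon (𝕜 : Type) [Field 𝕜] {σ : Type} (s : Finset σ) : MvPolynomial σ 𝕜 :=
  ∏ j ∈ s, X j

/-- The supports of the minimal monomial generating set `G(I)` of a squarefree monomial
ideal `I`: supports `s` of squarefree monomials in `I` no proper (squarefree) divisor of which
lies in `I`. -/
def sqfreeMinGens {𝕜 : Type} [Field 𝕜] {σ : Type} (I : Ideal (MvPolynomial σ 𝕜)) :
    Set (Finset σ) :=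
  { s | sfMon 𝕜 s ∈ I ∧ ∀ t : Finset σ, t ⊂ s → sfMon 𝕜 t ∉ I }

/-- `C_i(I) = ⋂ { supp m : m ∈ G(I), x_i ∣ m }`. -/
def suppC {𝕜 : Type} [Field 𝕜] {σ : Type} (I : Ideal (MvPolynomial σ 𝕜)) (i : σ) : Set σ :=
  ⋂ s ∈ { s | s ∈ sqfreeMinGens I ∧ i ∈ s }, (s : Set σ)

section Aux
variable {𝕜 : Type} [Field 𝕜] {σ : Type} [DecidableEq σ]

/-- The exponent finsupp of the squarefree monomial with support `s`. -/
noncomputable def Dd (s : Finset σ) : σ →₀ ℕ := ∑ j ∈ s, Finsupp.single j 1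

lemma sfMon_eq_monomial (s : Finset σ) : sfMon 𝕜 s = monomial (Dd s) 1 := by
  rw [Dd, monomial_sum_one]
  rfl

lemma Dd_apply (s : Finset σ) (j : σ) : Dd s j = if j ∈ s then 1 else 0 := by
  classical
  simp [Dd, Finsupp.finset_sum_apply, Finsupp.single_apply, Finset.sum_ite_eq']

lemma Dd_le (s t : Finset σ) : Dd s ≤ Dd t ↔ s ⊆ t := by
  constructor
  · intro h j hj
    have := h j
    rw [Dd_apply, Dd_apply, if_pos hj] at this
    by_contra hjt
    rw [if_neg hjt] at this
    omega
  · intro h j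
    rw [Dd_apply, Dd_apply]
    by_cases hj : j ∈ s
    · rw [if_pos hj, if_pos (h hj)]
    · simp [hj]

lemma sfMon_mem_span_iff (S : Set (Finset σ)) (t : Finset σ) :
    sfMon 𝕜 t ∈ Ideal.span (sfMon 𝕜 '' S) ↔ ∃ s ∈ S, s ⊆ t := by
  have himg : sfMon 𝕜 '' S = (fun d => monomial d (1 : 𝕜)) '' (Dd '' S) := by
    rw [Set.image_image]
    exact Set.image_congr fun s _ => sfMon_eq_monomial s
  rw [himg, mem_ideal_span_monomial_image, sfMon_eq_monomial]
  classical
  rw [support_monomial, if_neg (one_ne_zero)]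
  constructor
  · intro h
    obtain ⟨si, ⟨s, hs, rfl⟩, hle⟩ := h (Dd t) (Finset.mem_singleton_self _)
    exact ⟨s, hs, (Dd_le s t).mp hle⟩
  · rintro ⟨s, hs, hsub⟩ xi hxi
    rw [Finset.mem_singleton] at hxi
    subst hxi
    exact ⟨Dd s, ⟨s, hs, rfl⟩, (Dd_le s t).mpr hsub⟩

lemma minGens_eq (S : Set (Finset σ)) (h : ∀ s ∈ S, ∀ s' ∈ S, ¬ s ⊂ s') :
    sqfreeMinGens (Ideal.span (sfMon 𝕜 '' S)) = S := by
  ext s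
  simp only [sqfreeMinGens, Set.mem_setOf_eq, sfMon_mem_span_iff]
  constructor
  · rintro ⟨⟨s', hs', hsub⟩, hmin⟩
    rcases eq_or_ne s' s with rfl | hne
    · exact hs'
    · exact absurd ⟨s', hs', subset_refl s'⟩ (hmin s' (lt_of_le_of_ne hsub hne))
  · intro hs
    refine ⟨⟨s, hs, subset_refl s⟩, ?_⟩
    rintro t ht ⟨s', hs', hsub⟩
    exact h s' hs' s hs (lt_of_le_of_lt hsub ht)

end Aux

/-- The "full" generator support `{(i,1),(i,2),(i,3),(i,4)}`. -/
def dA {m : ℕ} (i : Fin m) : Finset (Fin m × Fin 4) := {(i, 0), (i, 1), (i, 2), (i, 3)}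

/-- The "mixed" generator support `{(i,1),(i,2),(i+1,1),(i+1,3)}`. -/
def dB {m : ℕ} (e i : Fin m) : Finset (Fin m × Fin 4) :=
  {(i, 0), (i, 1), (i + e, 0), (i + e, 2)}

lemma mem_dA {m : ℕ} (i : Fin m) (x : Fin m × Fin 4) :
    x ∈ dA i ↔ x = (i, 0) ∨ x = (i, 1) ∨ x = (i, 2) ∨ x = (i, 3) := by
  simp [dA]

lemma mem_dB {m : ℕ} (e i : Fin m) (x : Fin m × Fin 4) :
    x ∈ dB e i ↔ x = (i, 0) ∨ x = (i, 1) ∨ x = (i + e, 0) ∨ x = (i + e, 2) := by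
  simp [dB]

lemma card_dA {m : ℕ} (i : Fin m) : (dA i).card = 4 := by
  rw [dA, Finset.card_insert_of_notMem (by simp), Finset.card_insert_of_notMem (by simp),
    Finset.card_insert_of_notMem (by simp), Finset.card_singleton]

lemma card_dB {m : ℕ} (e i : Fin m) (h : i + e ≠ i) : (dB e i).card = 4 := by
  rw [dB, Finset.card_insert_of_notMem (by simp [Prod.ext_iff, h.symm]),
    Finset.card_insert_of_notMem (by simp [Prod.ext_iff, h.symm]),
    Finset.card_insert_of_notMem (by simp), Finset.card_singleton]

section Cases
variable {α : Type} (i ip im j jp : α) (x : α × Fin 4)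

lemma case0 (hp : ip ≠ i) (hm : im ≠ i)
    (h1 : x = (i, 0) ∨ x = (i, 1) ∨ x = (i, 2) ∨ x = (i, 3))
    (h2 : x = (i, 0) ∨ x = (i, 1) ∨ x = (ip, 0) ∨ x = (ip, 2))
    (h3 : x = (im, 0) ∨ x = (im, 1) ∨ x = (i, 0) ∨ x = (i, 2)) :
    x = (i, 0) := by
  rcases h1 with rfl | rfl | rfl | rfl <;> simp_all [Prod.ext_iff]

lemma case1 (hp : ip ≠ i)
    (h1 : x = (i, 0) ∨ x = (i, 1) ∨ x = (i, 2) ∨ x = (i, 3))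
    (h2 : x = (i, 0) ∨ x = (i, 1) ∨ x = (ip, 0) ∨ x = (ip, 2)) :
    x = (i, 0) ∨ x = (i, 1) := by
  rcases h1 with rfl | rfl | rfl | rfl <;> simp_all [Prod.ext_iff]

lemma case2 (hm : im ≠ i)
    (h1 : x = (i, 0) ∨ x = (i, 1) ∨ x = (i, 2) ∨ x = (i, 3))
    (h3 : x = (im, 0) ∨ x = (im, 1) ∨ x = (i, 0) ∨ x = (i, 2)) :
    x = (i, 0) ∨ x = (i, 2) := by
  rcases h1 with rfl | rfl | rfl | rfl <;> simp_all [Prod.ext_iff]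

lemma bwdA {r : Fin 4}
    (hp : ((i, r) : α × Fin 4) = (j, 0) ∨ (i, r) = (j, 1) ∨ (i, r) = (j, 2) ∨ (i, r) = (j, 3)) :
    j = i := by
  rcases hp with h | h | h | h <;> simp_all [Prod.ext_iff]

lemma bwdB1
    (hp : ((i, 1) : α × Fin 4) = (j, 0) ∨ (i, (1 : Fin 4)) = (j, 1) ∨ (i, (1 : Fin 4)) = (jp, 0) ∨ (i, (1 : Fin 4)) = (jp, 2)) :
    j = i := by
  rcases hp with h | h | h | h <;> simp_all [Prod.ext_iff]

lemma bwdB2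
    (hp : ((i, 2) : α × Fin 4) = (j, 0) ∨ (i, (2 : Fin 4)) = (j, 1) ∨ (i, (2 : Fin 4)) = (jp, 0) ∨ (i, (2 : Fin 4)) = (jp, 2)) :
    jp = i := by
  rcases hp with h | h | h | h <;> simp_all [Prod.ext_iff]

lemma bwdB3
    (hp : ((i, 3) : α × Fin 4) = (j, 0) ∨ (i, (3 : Fin 4)) = (j, 1) ∨ (i, (3 : Fin 4)) = (jp, 0) ∨ (i, (3 : Fin 4)) = (jp, 2)) :
    False := by
  rcases hp with h | h | h | h <;> simp_all [Prod.ext_iff]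

end Cases

/-- Proposition 3.4: the support poset of `Ī_m` consists of `m` disjoint diamonds.
Variables `x_{i,r}` (`1 ≤ i ≤ m`, `1 ≤ r ≤ 4`) are indexed by `(i-1, r-1) : Fin m × Fin 4`,
and the first index is cyclic mod `m`. -/
theorem stmt5 {𝕜 : Type} [Field 𝕜] (m : ℕ) (hm : 2 ≤ m)
    (I : Ideal (MvPolynomial (Fin m × Fin 4) 𝕜))
    (hI : I = Ideal.span { f |
      (∃ i : Fin m, f = sfMon 𝕜 ({(i, 0), (i, 1), (i, 2), (i, 3)} : Finset (Fin m × Fin 4))) ∨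
      (∃ i : Fin m, f = sfMon 𝕜
        ({(i, 0), (i, 1), (i + ⟨1, by omega⟩, 0), (i + ⟨1, by omega⟩, 2)} :
          Finset (Fin m × Fin 4))) }) :
    ∀ i : Fin m,
      suppC I (i, 0) = {(i, (0 : Fin 4))} ∧
      suppC I (i, 1) = {(i, (0 : Fin 4)), (i, 1)} ∧
      suppC I (i, 2) = {(i, (0 : Fin 4)), (i, 2)} ∧
      suppC I (i, 3) = {(i, (0 : Fin 4)), (i, 1), (i, 2), (i, 3)} := by
  haveI : NeZero m := ⟨by omega⟩
  obtain ⟨e, he⟩ : ∃ e : Fin m, e = (⟨1, by omega⟩ : Fin m) := ⟨_, rfl⟩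
  have hadd : ∀ j : Fin m, j + e ≠ j := by
    intro j h
    have h0 : e = 0 := by
      rwa [← add_zero j, add_assoc, zero_add, add_right_inj] at h
    rw [he] at h0
    exact absurd (congrArg Fin.val h0) (by simp)
  have hSet : { f |
      (∃ i : Fin m, f = sfMon 𝕜 ({(i, 0), (i, 1), (i, 2), (i, 3)} : Finset (Fin m × Fin 4))) ∨
      (∃ i : Fin m, f = sfMon 𝕜
        ({(i, 0), (i, 1), (i + ⟨1, by omega⟩, 0), (i + ⟨1, by omega⟩, 2)} :
          Finset (Fin m × Fin 4))) } = sfMon 𝕜 '' (Set.range dA ∪ Set.range (dB e)) := by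
    subst he
    ext f
    simp only [Set.mem_setOf_eq, Set.image_union, Set.mem_union, Set.mem_image, Set.mem_range]
    constructor
    · rintro (⟨j, rfl⟩ | ⟨j, rfl⟩)
      · exact Or.inl ⟨dA j, ⟨j, rfl⟩, rfl⟩
      · exact Or.inr ⟨dB _ j, ⟨j, rfl⟩, rfl⟩
    · rintro (⟨s, ⟨j, rfl⟩, rfl⟩ | ⟨s, ⟨j, rfl⟩, rfl⟩)
      · exact Or.inl ⟨j, rfl⟩
      · exact Or.inr ⟨j, rfl⟩
  have hmg : sqfreeMinGens I = Set.range dA ∪ Set.range (dB e) := by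
    rw [hI, hSet, minGens_eq]
    rintro s (⟨j, rfl⟩ | ⟨j, rfl⟩) s' (⟨j', rfl⟩ | ⟨j', rfl⟩) hss <;>
      have hcc := Finset.card_lt_card hss <;>
      simp only [card_dA, card_dB _ _ (hadd _)] at hcc <;> omega
  have hmem : ∀ (p x : Fin m × Fin 4),
      x ∈ suppC I p ↔ ∀ j : Fin m, (p ∈ dA j → x ∈ dA j) ∧ (p ∈ dB e j → x ∈ dB e j) := by
    intro p x
    simp only [suppC, hmg, Set.mem_iInter, Set.mem_setOf_eq, Set.mem_union, Set.mem_range,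
      and_imp, Finset.mem_coe]
    constructor
    · intro h j
      exact ⟨fun hp => h (dA j) (Or.inl ⟨j, rfl⟩) hp, fun hp => h (dB e j) (Or.inr ⟨j, rfl⟩) hp⟩
    · rintro h s (⟨j, rfl⟩ | ⟨j, rfl⟩) hp
      · exact (h j).1 hp
      · exact (h j).2 hp
  intro i
  have hsub : i - e + e = i := sub_add_cancel i e
  have hne1 : i + e ≠ i := hadd i
  have hne2 : i - e ≠ i := by
    intro h
    exact hadd (i - e) (by rw [hsub, h])
  refine ⟨?_, ?_, ?_, ?_⟩
  · ext x
    rw [hmem]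
    constructor
    · intro h
      have h1 := (h i).1 (by simp [mem_dA])
      have h2 := (h i).2 (by simp [mem_dB])
      have h3 := (h (i - e)).2 (by simp [mem_dB, hsub])
      rw [mem_dA] at h1
      rw [mem_dB] at h2
      rw [mem_dB, hsub] at h3
      exact case0 i (i + e) (i - e) x hne1 hne2 h1 h2 h3
    · rintro rfl j
      exact ⟨fun hp => hp, fun hp => hp⟩
  · ext x
    rw [hmem]
    constructor
    · intro h
      have h1 := (h i).1 (by simp [mem_dA])
      have h2 := (h i).2 (by simp [mem_dB])
      rw [mem_dA] at h1
      rw [mem_dB] at h2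
      exact case1 i (i + e) x hne1 h1 h2
    · intro hx j
      simp only [Set.mem_insert_iff, Set.mem_singleton_iff] at hx
      constructor
      · intro hp
        rw [mem_dA] at hp
        obtain rfl := bwdA i j hp
        rcases hx with rfl | rfl <;> simp [mem_dA]
      · intro hp
        rw [mem_dB] at hp
        obtain rfl := bwdB1 i j (j + e) hp
        rcases hx with rfl | rfl <;> simp [mem_dB]
  · ext x
    rw [hmem]
    constructor
    · intro h
      have h1 := (h i).1 (by simp [mem_dA])
      have h3 := (h (i - e)).2 (by simp [mem_dB, hsub])
      rw [mem_dA] at h1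
      rw [mem_dB, hsub] at h3
      exact case2 i (i - e) x hne2 h1 h3
    · intro hx j
      simp only [Set.mem_insert_iff, Set.mem_singleton_iff] at hx
      constructor
      · intro hp
        rw [mem_dA] at hp
        obtain rfl := bwdA i j hp
        rcases hx with rfl | rfl <;> simp [mem_dA]
      · intro hp
        rw [mem_dB] at hp
        have hje := bwdB2 i j (j + e) hp
        obtain rfl : j = i - e := by rw [← hje]; exact (add_sub_cancel_right j e).symm
        rcases hx with rfl | rfl <;> simp [mem_dB, hsub]
  · ext x
    rw [hmem]
    constructor
    · intro h
      have h1 := (h i).1 (by simp [mem_dA])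
      rw [mem_dA] at h1
      simpa [Set.mem_insert_iff] using h1
    · intro hx j
      simp only [Set.mem_insert_iff, Set.mem_singleton_iff] at hx
      constructor
      · intro hp
        rw [mem_dA] at hp
        obtain rfl := bwdA i j hp
        rcases hx with rfl | rfl | rfl | rfl <;> simp [mem_dA]
      · intro hp
        rw [mem_dB] at hp
        exact absurd hp (fun hp => bwdB3 i j (j + e) hp)
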